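/- (System GMM equivalence.) Under the hypotheses of the previous statement (existence of invertible C with CZ_{1i}' = Z_{1i}'U for all i), the system GMM estimator β̂_{K⁺} computed with first-differenced-plus-levels data (transformation K⁺ = diag(D,I)) equals the system GMM estimator β̂_{F⁺} computed with forward-orthogonal-deviations-plus-levels data (transformation F⁺ = diag(F,I) = U⁺K⁺), provided the same initial residuals e_i⁺ are used and all required matrix inverses exist. -/

import Mathlib

/-!
Since `F⁺ = U⁺ K⁺` with `U⁺ = diag(U, I)`, and the instruments satisfy
`Z⁺ᵢ' U⁺ = C⁺ Z⁺ᵢ'` with `C⁺ = diag(C, I)` invertible, replacing `K⁺` by `F⁺` multiplies both the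
moment matrix `Σ Z⁺ᵢ' K⁺ X⁺ᵢ` and the moment vector `Σ Z⁺ᵢ' K⁺ y⁺ᵢ` by `C⁺` on the left and turns the
weight matrix `W` into `C⁺ W C⁺'`. The GMM formula `(A' W⁻¹ A)⁻¹ A' W⁻¹ v` is invariant under
this change of coordinates in moment space.
-/

open Matrix

variable {ι m k p R : Type*} [Fintype ι] [Fintype m] [CommRing R]

section GMM

variable [Fintype k] [DecidableEq k] [Fintype p] [DecidableEq p]

/-- The GMM estimator with moment matrix `A = Σ Zᵢ'Xᵢ`, moment vector `v = Σ Zᵢ'yᵢ` and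
weight matrix `W`. -/
noncomputable def gmmSolve (A : Matrix k p R) (v : k → R) (W : Matrix k k R) : p → R :=
  (Aᵀ * W⁻¹ * A)⁻¹ *ᵥ ((Aᵀ * W⁻¹) *ᵥ v)

theorem gmmSolve_conj {C : Matrix k k R} (hC : IsUnit C) (A : Matrix k p R) (v : k → R)
    (W : Matrix k k R) : gmmSolve (C * A) (C *ᵥ v) (C * W * Cᵀ) = gmmSolve A v W := by
  have hdet : IsUnit C.det := (isUnit_iff_isUnit_det C).mp hC
  have hCt : Cᵀ * Cᵀ⁻¹ = 1 := mul_nonsing_inv _ (by rwa [det_transpose])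
  have hweighted : (C * A)ᵀ * (C * W * Cᵀ)⁻¹ = Aᵀ * W⁻¹ * C⁻¹ := by
    rw [transpose_mul, Matrix.mul_inv_rev, Matrix.mul_inv_rev, Matrix.mul_assoc Aᵀ,
      ← Matrix.mul_assoc Cᵀ, hCt, Matrix.one_mul, Matrix.mul_assoc]
  have hcancel : Aᵀ * W⁻¹ * C⁻¹ * C = Aᵀ * W⁻¹ := by
    rw [Matrix.mul_assoc, nonsing_inv_mul _ hdet, Matrix.mul_one]
  rw [gmmSolve, gmmSolve, hweighted, mulVec_mulVec v (Aᵀ * W⁻¹ * C⁻¹), hcancel,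
    ← Matrix.mul_assoc (Aᵀ * W⁻¹ * C⁻¹), hcancel]

end GMM

theorem sum_transpose_mul_eq_transpose_sum {n : Type*} (Z : ι → Matrix m k R)
    (X : ι → Matrix m n R) : ∑ i, (X i)ᵀ * Z i = (∑ i, (Z i)ᵀ * X i)ᵀ := by
  simp [transpose_sum, transpose_mul]

theorem vecMulVec_mulVec_mulVec {n : Type*} (M : Matrix n m R) (u : m → R) :
    vecMulVec (M *ᵥ u) (M *ᵥ u) = M * vecMulVec u u * Mᵀ := by
  rw [mul_vecMulVec, vecMulVec_mul, vecMul_transpose]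

section Intertwining

variable [Fintype k] {Z : ι → Matrix m k R} {U : Matrix m m R} {C : Matrix k k R}

theorem sum_transpose_mul_mul_of_intertwine (hZ : ∀ i, (Z i)ᵀ * U = C * (Z i)ᵀ)
    {n : Type*} (X : ι → Matrix m n R) :
    ∑ i, (Z i)ᵀ * (U * X i) = C * ∑ i, (Z i)ᵀ * X i := by
  simp only [Matrix.mul_sum, ← Matrix.mul_assoc, hZ]

theorem sum_transpose_mulVec_mulVec_of_intertwine (hZ : ∀ i, (Z i)ᵀ * U = C * (Z i)ᵀ)
    (y : ι → m → R) : ∑ i, (Z i)ᵀ *ᵥ (U *ᵥ y i) = C *ᵥ ∑ i, (Z i)ᵀ *ᵥ y i := by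
  simp only [mulVec_sum, mulVec_mulVec, hZ]

theorem sum_transpose_mul_vecMulVec_mul_of_intertwine (hZ : ∀ i, (Z i)ᵀ * U = C * (Z i)ᵀ) (u : ι → m → R) :
    ∑ i, (Z i)ᵀ * vecMulVec (U *ᵥ u i) (U *ᵥ u i) * Z i =
      C * (∑ i, (Z i)ᵀ * vecMulVec (u i) (u i) * Z i) * Cᵀ := by
  have hZt : ∀ i, Uᵀ * Z i = Z i * Cᵀ := fun i => by
    simpa [transpose_mul] using congrArg transpose (hZ i)
  simp only [Matrix.mul_sum, Matrix.sum_mul, vecMulVec_mulVec_mulVec]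
  refine Finset.sum_congr rfl fun i _ => ?_
  rw [← Matrix.mul_assoc, ← Matrix.mul_assoc, hZ, Matrix.mul_assoc _ _ (Z i), hZt,
    ← Matrix.mul_assoc, Matrix.mul_assoc C, Matrix.mul_assoc C]

end Intertwining

theorem fromBlocks_transpose_mul_of_intertwine {m₁ m₂ k₁ k₂ : Type*} [Fintype m₁] [Fintype m₂]
    [Fintype k₁] [Fintype k₂] {Z₁ : Matrix m₁ k₁ R} {Z₂ : Matrix m₂ k₂ R}
    {U₁ : Matrix m₁ m₁ R} {U₂ : Matrix m₂ m₂ R} {C₁ : Matrix k₁ k₁ R} {C₂ : Matrix k₂ k₂ R}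
    (h₁ : Z₁ᵀ * U₁ = C₁ * Z₁ᵀ) (h₂ : Z₂ᵀ * U₂ = C₂ * Z₂ᵀ) :
    (fromBlocks Z₁ 0 0 Z₂)ᵀ * fromBlocks U₁ 0 0 U₂ =
      fromBlocks C₁ 0 0 C₂ * (fromBlocks Z₁ 0 0 Z₂)ᵀ := by
  simp [fromBlocks_transpose, fromBlocks_multiply, h₁, h₂]

theorem system_gmm_equivalence_general
    (N T p k1 k2 : ℕ)
    (D F : Matrix (Fin (T - 1)) (Fin T) ℝ)
    (U : Matrix (Fin (T - 1)) (Fin (T - 1)) ℝ)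
    (hF : F = U * D)
    (Z1 : Fin N → Matrix (Fin (T - 1)) (Fin k1) ℝ)
    (Z2 : Fin N → Matrix (Fin T) (Fin k2) ℝ)
    (C : Matrix (Fin k1) (Fin k1) ℝ) (hC : IsUnit C)
    (hCZ : ∀ i, C * (Z1 i)ᵀ = (Z1 i)ᵀ * U)
    (Kp Fp : Matrix (Fin (T - 1) ⊕ Fin T) (Fin T ⊕ Fin T) ℝ)
    (hKp : Kp = fromBlocks D 0 0 (1 : Matrix (Fin T) (Fin T) ℝ))
    (hFp : Fp = fromBlocks F 0 0 (1 : Matrix (Fin T) (Fin T) ℝ))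
    (Zp : Fin N → Matrix (Fin (T - 1) ⊕ Fin T) (Fin k1 ⊕ Fin k2) ℝ)
    (hZp : ∀ i, Zp i = fromBlocks (Z1 i) 0 0 (Z2 i))
    (X : Fin N → Matrix (Fin T ⊕ Fin T) (Fin p) ℝ)
    (y e : Fin N → (Fin T ⊕ Fin T) → ℝ)
    (WK WF : Matrix (Fin k1 ⊕ Fin k2) (Fin k1 ⊕ Fin k2) ℝ)
    (hWK : WK = ∑ i, (Zp i)ᵀ * vecMulVec (Kp *ᵥ e i) (Kp *ᵥ e i) * Zp i)
    (hWF : WF = ∑ i, (Zp i)ᵀ * vecMulVec (Fp *ᵥ e i) (Fp *ᵥ e i) * Zp i)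
    (HK HF : Matrix (Fin p) (Fin p) ℝ)
    (hHK : HK = (∑ i, (Kp * X i)ᵀ * Zp i) * WK⁻¹ * (∑ i, (Zp i)ᵀ * (Kp * X i)))
    (hHF : HF = (∑ i, (Fp * X i)ᵀ * Zp i) * WF⁻¹ * (∑ i, (Zp i)ᵀ * (Fp * X i)))
    (βK βF : Fin p → ℝ)
    (hβK : βK = HK⁻¹ *ᵥ (((∑ i, (Kp * X i)ᵀ * Zp i) * WK⁻¹) *ᵥ
      (∑ i, (Zp i)ᵀ *ᵥ (Kp *ᵥ y i))))
    (hβF : βF = HF⁻¹ *ᵥ (((∑ i, (Fp * X i)ᵀ * Zp i) * WF⁻¹) *ᵥ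
      (∑ i, (Zp i)ᵀ *ᵥ (Fp *ᵥ y i)))) :
    βF = βK := by
  set Up := fromBlocks U 0 0 (1 : Matrix (Fin T) (Fin T) ℝ)
  set Cp := fromBlocks C 0 0 (1 : Matrix (Fin k2) (Fin k2) ℝ)
  have hFp_eq : Fp = Up * Kp := by simp [hFp, hKp, hF, Up, fromBlocks_multiply]
  have hZ : ∀ i, (Zp i)ᵀ * Up = Cp * (Zp i)ᵀ := fun i => by
    rw [hZp i]
    exact fromBlocks_transpose_mul_of_intertwine (hCZ i).symm (by simp)
  have hCp : IsUnit Cp := isUnit_fromBlocks_zero₁₂.mpr ⟨hC, isUnit_one⟩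
  have hβK' : βK = gmmSolve (∑ i, (Zp i)ᵀ * (Kp * X i)) (∑ i, (Zp i)ᵀ *ᵥ (Kp *ᵥ y i)) WK := by
    rw [hβK, hHK, sum_transpose_mul_eq_transpose_sum]; rfl
  have hβF' : βF = gmmSolve (∑ i, (Zp i)ᵀ * (Fp * X i)) (∑ i, (Zp i)ᵀ *ᵥ (Fp *ᵥ y i)) WF := by
    rw [hβF, hHF, sum_transpose_mul_eq_transpose_sum]; rfl
  simp only [hβF', hβK', hWF, hWK, hFp_eq, Matrix.mul_assoc Up Kp, ← mulVec_mulVec,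
    sum_transpose_mul_mul_of_intertwine hZ, sum_transpose_mulVec_mulVec_of_intertwine hZ,
    sum_transpose_mul_vecMulVec_mul_of_intertwine hZ, gmmSolve_conj hCp]

/-- System GMM equivalence: if there exists an invertible `C` with `C Z_{1i}ᵀ = Z_{1i}ᵀ U`
for all `i`, then the system GMM estimator based on first-differenced-plus-levels data
(transformation `K⁺ = diag(D, I)`) equals the one based on forward-orthogonal-deviations-
plus-levels data (transformation `F⁺ = diag(F, I) = U⁺ K⁺`), using the same initial
residuals, provided all indicated inverses exist. -/
theorem system_gmm_equivalence
    (N T p k1 k2 : ℕ) (hT : 2 ≤ T)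
    (D F : Matrix (Fin (T - 1)) (Fin T) ℝ)
    (hD : ∀ (t : Fin (T - 1)) (s : Fin T),
      D t s = if (s : ℕ) = (t : ℕ) then -1 else if (s : ℕ) = (t : ℕ) + 1 then 1 else 0)
    (U : Matrix (Fin (T - 1)) (Fin (T - 1)) ℝ)
    (hUtri : U.BlockTriangular id)
    (hU : Uᵀ * U = (D * Dᵀ)⁻¹)
    (hF : F = U * D)
    (Z1 : Fin N → Matrix (Fin (T - 1)) (Fin k1) ℝ)
    (Z2 : Fin N → Matrix (Fin T) (Fin k2) ℝ)
    (C : Matrix (Fin k1) (Fin k1) ℝ) (hC : IsUnit C)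
    (hCZ : ∀ i, C * (Z1 i)ᵀ = (Z1 i)ᵀ * U)
    (Kp Fp : Matrix (Fin (T - 1) ⊕ Fin T) (Fin T ⊕ Fin T) ℝ)
    (hKp : Kp = fromBlocks D 0 0 (1 : Matrix (Fin T) (Fin T) ℝ))
    (hFp : Fp = fromBlocks F 0 0 (1 : Matrix (Fin T) (Fin T) ℝ))
    (Zp : Fin N → Matrix (Fin (T - 1) ⊕ Fin T) (Fin k1 ⊕ Fin k2) ℝ)
    (hZp : ∀ i, Zp i = fromBlocks (Z1 i) 0 0 (Z2 i))
    (X : Fin N → Matrix (Fin T ⊕ Fin T) (Fin p) ℝ)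
    (y e : Fin N → (Fin T ⊕ Fin T) → ℝ)
    (WK WF : Matrix (Fin k1 ⊕ Fin k2) (Fin k1 ⊕ Fin k2) ℝ)
    (hWK : WK = ∑ i, (Zp i)ᵀ * vecMulVec (Kp *ᵥ e i) (Kp *ᵥ e i) * Zp i)
    (hWF : WF = ∑ i, (Zp i)ᵀ * vecMulVec (Fp *ᵥ e i) (Fp *ᵥ e i) * Zp i)
    (hWKu : IsUnit WK) (hWFu : IsUnit WF)
    (HK HF : Matrix (Fin p) (Fin p) ℝ)
    (hHK : HK = (∑ i, (Kp * X i)ᵀ * Zp i) * WK⁻¹ * (∑ i, (Zp i)ᵀ * (Kp * X i)))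
    (hHF : HF = (∑ i, (Fp * X i)ᵀ * Zp i) * WF⁻¹ * (∑ i, (Zp i)ᵀ * (Fp * X i)))
    (hHKu : IsUnit HK) (hHFu : IsUnit HF)
    (βK βF : Fin p → ℝ)
    (hβK : βK = HK⁻¹ *ᵥ (((∑ i, (Kp * X i)ᵀ * Zp i) * WK⁻¹) *ᵥ
      (∑ i, (Zp i)ᵀ *ᵥ (Kp *ᵥ y i))))
    (hβF : βF = HF⁻¹ *ᵥ (((∑ i, (Fp * X i)ᵀ * Zp i) * WF⁻¹) *ᵥ
      (∑ i, (Zp i)ᵀ *ᵥ (Fp *ᵥ y i)))) :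
    βF = βK :=
  system_gmm_equivalence_general N T p k1 k2 D F U hF Z1 Z2 C hC hCZ Kp Fp hKp hFp Zp hZp X y e WK
    WF hWK hWF HK HF hHK hHF βK βF hβK hβF
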